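/- arXiv:2206.11525 — 6 statements merged into one kernel-verified Lean document; each statement's English description precedes it below -/
import Mathlib

section
/- A kidney exchange solution X is rejection-proof if and only if for every agent i and every subset U of agent i's vertices, the total agent-i value of exchanges in X that intersect U is at least β(U), the maximum agent-i value of a feasible solution using exchanges entirely contained in U. -/
open Finset
open scoped Classical

variable {V E P : Type*}

/-- A feasible kidney exchange solution: a set of pairwise vertex-disjoint exchanges. -/
def Feasible (Vs : E → Finset V) (X : Finset E) : Prop :=
  ∀ e ∈ X, ∀ f ∈ X, e ≠ f → Disjoint (Vs e) (Vs f)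

/-- An exchange is internal to agent `i` if all its vertices belong to `i`. -/
def Internal (Vs : E → Finset V) (VA : P → Finset V) (i : P) (e : E) : Prop :=
  Vs e ⊆ VA i

/-- A shared exchange is one internal to no agent. -/
def Shared (Vs : E → Finset V) (VA : P → Finset V) (e : E) : Prop :=
  ¬ ∃ i, Internal Vs VA i e

/-- A rejection strategy of agent `i` against proposed solution `X`. -/
def RejStrat [DecidableEq V] (Vs : E → Finset V) (VA : P → Finset V) (i : P)
    (X Xi : Finset E) : Prop :=
  Feasible Vs Xi ∧ (∀ e ∈ Xi, (Vs e ∩ VA i).Nonempty) ∧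
    (∀ e ∈ Xi, Shared Vs VA e → e ∈ X)

/-- The value of a solution to agent `i`. -/
def agentVal (w : P → E → ℝ) (i : P) (X : Finset E) : ℝ := ∑ e ∈ X, w i e

/-- `X` is rejection-proof: RKEP(X,i) ≤ w^i(X) for every agent `i`, i.e. every
rejection strategy has agent value at most that of `X`. -/
def RejectionProof [DecidableEq V] (Vs : E → Finset V) (VA : P → Finset V)
    (w : P → E → ℝ) (X : Finset E) : Prop :=
  ∀ i Xi, RejStrat Vs VA i X Xi → agentVal w i Xi ≤ agentVal w i X

/-- The subset rejection constraint for agent `i` and `U ⊆ V^i`: the agent-i value of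
exchanges of `X` intersecting `U` is at least β(U), i.e. at least the value of every
feasible solution all of whose exchanges lie inside `U`. -/
def SubsetOK [DecidableEq V] (Vs : E → Finset V) (VA : P → Finset V)
    (w : P → E → ℝ) (X : Finset E) (i : P) (U : Finset V) : Prop :=
  ∀ Y : Finset E, Feasible Vs Y → (∀ e ∈ Y, Vs e ⊆ U) →
    agentVal w i Y ≤ ∑ e ∈ X.filter (fun e => (Vs e ∩ U).Nonempty), w i e

/-! If `X` is rejection-proof and `Y` is a feasible solution inside `U ⊆ V^i`, agent `i` can
reject with `Y` together with the exchanges of `X` it touches outside `U`; since exchanges not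
touching `V^i` are worthless to `i`, comparing with `w^i(X)` leaves `w^i(Y)` at most the value
of the exchanges of `X` meeting `U`. Conversely, a rejection strategy splits into its shared
exchanges, which lie in `X`, and internal exchanges of `i`, which lie in the set `U` of vertices
of `i` left free by the shared ones; the constraint for this `U` bounds the internal part by the
value of the exchanges of `X` meeting `U`, and these are disjoint from the shared part. -/

section

variable {Vs : E → Finset V} {VA : P → Finset V}

theorem Feasible.mono {X Y : Finset E} (hX : Feasible Vs X) (hYX : Y ⊆ X) : Feasible Vs Y :=
  fun e he f hf hef => hX e (hYX he) f (hYX hf) hef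

theorem Feasible.union [DecidableEq E] {Y Z : Finset E} (hY : Feasible Vs Y) (hZ : Feasible Vs Z)
    (hYZ : ∀ e ∈ Y, ∀ f ∈ Z, Disjoint (Vs e) (Vs f)) : Feasible Vs (Y ∪ Z) := by
  intro e he f hf hef
  rcases mem_union.1 he with he | he <;> rcases mem_union.1 hf with hf | hf
  · exact hY e he f hf hef
  · exact hYZ e he f hf
  · exact (hYZ f hf e he).symm
  · exact hZ e he f hf hef

variable [DecidableEq V]

theorem disjoint_of_subset_of_not_nonempty_inter {s t U : Finset V} (hs : s ⊆ U)
    (ht : ¬ (t ∩ U).Nonempty) : Disjoint s t :=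
  disjoint_left.2 fun _ hvs hvt => ht ⟨_, mem_inter.2 ⟨hvt, hs hvs⟩⟩

theorem rejStrat_union_filter_outside [DecidableEq E] (hne : ∀ e, (Vs e).Nonempty)
    {X Y : Finset E} (hX : Feasible Vs X) {i : P} {U : Finset V} (hU : U ⊆ VA i)
    (hY : Feasible Vs Y) (hYU : ∀ e ∈ Y, Vs e ⊆ U) :
    RejStrat Vs VA i X
      (Y ∪ X.filter fun e => ¬ (Vs e ∩ U).Nonempty ∧ (Vs e ∩ VA i).Nonempty) := by
  refine ⟨hY.union (hX.mono (filter_subset _ _)) fun e he f hf =>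
    disjoint_of_subset_of_not_nonempty_inter (hYU e he) (mem_filter.1 hf).2.1, ?_, ?_⟩
  · intro e he
    rcases mem_union.1 he with he | he
    · obtain ⟨v, hv⟩ := hne e
      exact ⟨v, mem_inter.2 ⟨hv, hU (hYU e he hv)⟩⟩
    · exact (mem_filter.1 he).2.2
  · intro e he hsh
    rcases mem_union.1 he with he | he
    · exact absurd ⟨i, (hYU e he).trans hU⟩ hsh
    · exact (mem_filter.1 he).1

theorem subsetOK_of_rejectionProof [DecidableEq E] {w : P → E → ℝ} {i : P}
    (hne : ∀ e, (Vs e).Nonempty) (hzero : ∀ e, ¬ (Vs e ∩ VA i).Nonempty → w i e = 0)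
    {X : Finset E} (hX : Feasible Vs X) (hRP : RejectionProof Vs VA w X)
    {U : Finset V} (hU : U ⊆ VA i) : SubsetOK Vs VA w X i U := by
  intro Y hY hYU
  have hYZ : Disjoint Y (X.filter fun e => ¬ (Vs e ∩ U).Nonempty ∧ (Vs e ∩ VA i).Nonempty) :=
    disjoint_left.2 fun e heY heZ =>
      (mem_filter.1 heZ).2.1 ((hne e).mono (subset_inter subset_rfl (hYU e heY)))
  have hrej := hRP i _ (rejStrat_union_filter_outside hne hX hU hY hYU)
  have houtside : ∑ e ∈ X.filter (fun e => ¬ (Vs e ∩ U).Nonempty), w i e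
      = ∑ e ∈ X.filter (fun e => ¬ (Vs e ∩ U).Nonempty ∧ (Vs e ∩ VA i).Nonempty), w i e := by
    rw [← filter_filter, sum_filter_of_ne fun e _ hw => not_not.1 (mt (hzero e) hw)]
  have hsplit := sum_filter_add_sum_filter_not X (fun e => (Vs e ∩ U).Nonempty) (w i)
  rw [agentVal, sum_union hYZ] at hrej
  rw [agentVal] at hrej ⊢
  linarith

theorem internal_of_not_shared (hpart : ∀ i j : P, i ≠ j → Disjoint (VA i) (VA j))
    {e : E} {i : P} (hi : (Vs e ∩ VA i).Nonempty) (he : ¬ Shared Vs VA e) : Internal Vs VA i e := by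
  obtain ⟨j, hj⟩ := not_not.1 he
  obtain ⟨v, hv⟩ := hi
  obtain rfl : j = i := by
    by_contra hji
    exact disjoint_left.1 (hpart j i hji) (hj (mem_inter.1 hv).1) (mem_inter.1 hv).2
  exact hj

theorem RejStrat.subset_sdiff_biUnion_shared (hpart : ∀ i j : P, i ≠ j → Disjoint (VA i) (VA j))
    {i : P} {X Xi : Finset E} (hXi : RejStrat Vs VA i X Xi) {e : E} (he : e ∈ Xi)
    (hns : ¬ Shared Vs VA e) :
    Vs e ⊆ VA i \ (Xi.filter fun f => Shared Vs VA f).biUnion Vs := by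
  intro v hv
  refine mem_sdiff.2 ⟨internal_of_not_shared hpart (hXi.2.1 e he) hns hv, fun hvS => ?_⟩
  obtain ⟨f, hf, hvf⟩ := mem_biUnion.1 hvS
  have hef : e ≠ f := fun h => hns (h ▸ (mem_filter.1 hf).2)
  exact disjoint_left.1 (hXi.1 e he f (mem_filter.1 hf).1 hef) hv hvf

theorem disjoint_filter_nonempty_inter_sdiff_biUnion (S X : Finset E) (A : Finset V) :
    Disjoint S (X.filter fun e => (Vs e ∩ (A \ S.biUnion Vs)).Nonempty) := by
  refine disjoint_left.2 fun e heS heX => ?_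
  obtain ⟨v, hv⟩ := (mem_filter.1 heX).2
  exact (mem_sdiff.1 (mem_inter.1 hv).2).2 (mem_biUnion.2 ⟨e, heS, (mem_inter.1 hv).1⟩)

theorem rejectionProof_of_subsetOK {w : P → E → ℝ}
    (hpart : ∀ i j : P, i ≠ j → Disjoint (VA i) (VA j)) (hw : ∀ i e, 0 ≤ w i e) {X : Finset E}
    (hSub : ∀ i : P, ∀ U ⊆ VA i, SubsetOK Vs VA w X i U) : RejectionProof Vs VA w X := by
  intro i Xi hXi
  set S := Xi.filter fun e => Shared Vs VA e
  set U := VA i \ S.biUnion Vs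
  have hinternal : agentVal w i (Xi.filter fun e => ¬ Shared Vs VA e)
      ≤ ∑ e ∈ X.filter (fun e => (Vs e ∩ U).Nonempty), w i e :=
    hSub i U sdiff_subset _ (hXi.1.mono (filter_subset _ _)) fun e he =>
      hXi.subset_sdiff_biUnion_shared hpart (mem_filter.1 he).1 (mem_filter.1 he).2
  have hSX : S ⊆ X := fun e he => hXi.2.2 e (mem_filter.1 he).1 (mem_filter.1 he).2
  calc agentVal w i Xi
      = ∑ e ∈ S, w i e + agentVal w i (Xi.filter fun e => ¬ Shared Vs VA e) :=
        (sum_filter_add_sum_filter_not _ _ _).symm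
    _ ≤ ∑ e ∈ S, w i e + ∑ e ∈ X.filter (fun e => (Vs e ∩ U).Nonempty), w i e := by gcongr
    _ = ∑ e ∈ S ∪ X.filter (fun e => (Vs e ∩ U).Nonempty), w i e :=
        (sum_union (disjoint_filter_nonempty_inter_sdiff_biUnion S X (VA i))).symm
    _ ≤ agentVal w i X :=
        sum_le_sum_of_subset_of_nonneg (union_subset hSX (filter_subset _ _))
          fun e _ _ => hw i e

end

theorem rejection_proof_iff_subset_constraints_general [DecidableEq V] [DecidableEq E]
    (Vs : E → Finset V) (VA : P → Finset V) (w : P → E → ℝ)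
    (hne : ∀ e, (Vs e).Nonempty)
    (hpart : ∀ i j : P, i ≠ j → Disjoint (VA i) (VA j))
    (hw : ∀ i e, 0 ≤ w i e)
    (hzero : ∀ (i : P) (e : E), ¬ (Vs e ∩ VA i).Nonempty → w i e = 0)
    (X : Finset E) (hX : Feasible Vs X) :
    RejectionProof Vs VA w X ↔
      ∀ i : P, ∀ U ⊆ VA i, SubsetOK Vs VA w X i U :=
  ⟨fun hRP i _ hU => subsetOK_of_rejectionProof hne (hzero i) hX hRP hU,
    rejectionProof_of_subsetOK hpart hw⟩

/-- X is rejection-proof iff all subset rejection constraints hold. -/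
theorem rejection_proof_iff_subset_constraints [DecidableEq V] [DecidableEq E]
    (Vs : E → Finset V) (VA : P → Finset V) (w : P → E → ℝ)
    (hne : ∀ e, (Vs e).Nonempty)
    (hpart : ∀ i j : P, i ≠ j → Disjoint (VA i) (VA j))
    (hcover : ∀ v : V, ∃ i : P, v ∈ VA i)
    (hw : ∀ i e, 0 ≤ w i e)
    (hzero : ∀ (i : P) (e : E), ¬ (Vs e ∩ VA i).Nonempty → w i e = 0)
    (X : Finset E) (hX : Feasible Vs X) :
    RejectionProof Vs VA w X ↔
      ∀ i : P, ∀ U ⊆ VA i, SubsetOK Vs VA w X i U :=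
  rejection_proof_iff_subset_constraints_general Vs VA w hne hpart hw hzero X hX
end

section
/- If a solution X satisfies all subset rejection constraints (for every agent i and every U ⊆ V^i, the agent-i value of exchanges in X intersecting U is at least β(U)), then X is rejection-proof. -/
open Finset
open scoped Classical

variable {V E P : Type*}

/-! Split a rejection strategy `Xi` of agent `i` into its shared exchanges `S`, which belong to `X`,
and its internal ones, which are internal to `i` and avoid the vertices of `S`. The internal part
is therefore a feasible solution inside `U = V^i \ V(S)`, so its value is at most that of the
exchanges of `X` meeting `U`; these are disjoint from `S`, and with nonnegative values the two
parts together are worth at most `w^i(X)`. -/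

theorem Feasible.subset {Vs : E → Finset V} {X Y : Finset E} (hX : Feasible Vs X) (hYX : Y ⊆ X) :
    Feasible Vs Y :=
  fun e he f hf => hX e (hYX he) f (hYX hf)

section RejectionStrategy

variable [DecidableEq V] {Vs : E → Finset V} {VA : P → Finset V}

theorem Feasible.disjoint_biUnion_of_notMem {X S : Finset E} (hX : Feasible Vs X) (hSX : S ⊆ X)
    {e : E} (he : e ∈ X) (heS : e ∉ S) : Disjoint (Vs e) (S.biUnion Vs) :=
  (disjoint_biUnion_right _ _ _).2 fun f hf =>
    hX e he f (hSX hf) fun hef => heS (hef ▸ hf)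

theorem Internal.of_inter_nonempty (hpart : ∀ i j : P, i ≠ j → Disjoint (VA i) (VA j))
    {i j : P} {e : E} (hj : Internal Vs VA j e) (hi : (Vs e ∩ VA i).Nonempty) :
    Internal Vs VA i e := by
  obtain ⟨v, hv⟩ := hi
  rw [mem_inter] at hv
  obtain rfl : i = j := by
    by_contra hij
    exact (hpart i j hij).notMem_of_mem_left_finset hv.2 (hj hv.1)
  exact hj

theorem RejStrat.subset_sdiff_of_not_shared (hpart : ∀ i j : P, i ≠ j → Disjoint (VA i) (VA j))
    {i : P} {X Xi : Finset E} (hXi : RejStrat Vs VA i X Xi) {e : E} (he : e ∈ Xi)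
    (hnsh : ¬ Shared Vs VA e) :
    Vs e ⊆ VA i \ (Xi.filter (Shared Vs VA)).biUnion Vs := by
  obtain ⟨j, hj⟩ := not_not.mp hnsh
  refine subset_sdiff.2 ⟨hj.of_inter_nonempty hpart (hXi.2.1 e he), ?_⟩
  exact hXi.1.disjoint_biUnion_of_notMem (filter_subset _ _) he fun heS => hnsh (mem_filter.1 heS).2

end RejectionStrategy

theorem sum_filter_meeting_add_sum_le [DecidableEq V] {Vs : E → Finset V} {w : E → ℝ}
    (hw : ∀ e, 0 ≤ w e) {X S : Finset E} (hSX : S ⊆ X) {U : Finset V}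
    (hU : Disjoint U (S.biUnion Vs)) :
    ∑ e ∈ X.filter (fun e => (Vs e ∩ U).Nonempty), w e + ∑ e ∈ S, w e ≤ ∑ e ∈ X, w e := by
  have hdisj : Disjoint (X.filter fun e => (Vs e ∩ U).Nonempty) S := by
    refine disjoint_left.2 fun e heU heS => ?_
    obtain ⟨v, hv⟩ := (mem_filter.1 heU).2
    rw [mem_inter] at hv
    exact hU.notMem_of_mem_left_finset hv.2 (mem_biUnion.2 ⟨e, heS, hv.1⟩)
  rw [← sum_union hdisj]
  exact sum_le_sum_of_subset_of_nonneg (union_subset (filter_subset _ _) hSX) fun e _ _ => hw e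

theorem rejection_proof_of_subset_constraints_general [DecidableEq V]
    (Vs : E → Finset V) (VA : P → Finset V) (w : P → E → ℝ)
    (hpart : ∀ i j : P, i ≠ j → Disjoint (VA i) (VA j))
    (hw : ∀ i e, 0 ≤ w i e)
    (X : Finset E)
    (h : ∀ i : P, ∀ U ⊆ VA i, SubsetOK Vs VA w X i U) :
    RejectionProof Vs VA w X := by
  intro i Xi hXi
  set S := Xi.filter (Shared Vs VA)
  set I := Xi.filter fun e => ¬ Shared Vs VA e
  set U := VA i \ S.biUnion Vs
  have hinternal : agentVal w i I ≤ ∑ e ∈ X.filter (fun e => (Vs e ∩ U).Nonempty), w i e :=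
    h i U sdiff_subset I (hXi.1.subset (filter_subset _ _)) fun e he =>
      hXi.subset_sdiff_of_not_shared hpart (mem_filter.1 he).1 (mem_filter.1 he).2
  have hSX : S ⊆ X := fun e he => hXi.2.2 e (mem_filter.1 he).1 (mem_filter.1 he).2
  have hshared := sum_filter_meeting_add_sum_le (hw i) hSX (U := U) sdiff_disjoint
  calc agentVal w i Xi = agentVal w i S + agentVal w i I :=
        (sum_filter_add_sum_filter_not Xi _ _).symm
    _ ≤ agentVal w i X := by unfold agentVal at *; linarith

/-- if all subset rejection constraints hold, X is rejection-proof. -/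
theorem rejection_proof_of_subset_constraints [DecidableEq V] [DecidableEq E]
    (Vs : E → Finset V) (VA : P → Finset V) (w : P → E → ℝ)
    (hne : ∀ e, (Vs e).Nonempty)
    (hpart : ∀ i j : P, i ≠ j → Disjoint (VA i) (VA j))
    (hw : ∀ i e, 0 ≤ w i e)
    (hzero : ∀ (i : P) (e : E), ¬ (Vs e ∩ VA i).Nonempty → w i e = 0)
    (X : Finset E) (hX : Feasible Vs X)
    (h : ∀ i : P, ∀ U ⊆ VA i, SubsetOK Vs VA w X i U) :
    RejectionProof Vs VA w X :=
  rejection_proof_of_subset_constraints_general Vs VA w hpart hw X h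
end

section
/- Let X and Y be feasible solutions such that (a) the set of shared exchanges of Y is a subset of the shared exchanges of X, and (b) w^i(Y) ≥ w^i(X) for every agent i. If X is rejection-proof then Y is rejection-proof. -/
open Finset
open scoped Classical

variable {V E P : Type*}

theorem RejStrat.of_shared_subset [DecidableEq V] {Vs : E → Finset V} {VA : P → Finset V}
    {i : P} {X Y Xi : Finset E} (hshared : ∀ e ∈ Y, Shared Vs VA e → e ∈ X)
    (h : RejStrat Vs VA i Y Xi) : RejStrat Vs VA i X Xi :=
  ⟨h.1, h.2.1, fun e he hse => hshared e (h.2.2 e he hse) hse⟩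

theorem rejection_proof_of_dominating_general [DecidableEq V]
    (Vs : E → Finset V) (VA : P → Finset V) (w : P → E → ℝ)
    (X Y : Finset E)
    (hshared : ∀ e ∈ Y, Shared Vs VA e → e ∈ X)
    (hval : ∀ i : P, agentVal w i X ≤ agentVal w i Y)
    (hrp : RejectionProof Vs VA w X) :
    RejectionProof Vs VA w Y :=
  fun i Xi hXi => (hrp i Xi (hXi.of_shared_subset hshared)).trans (hval i)

/-- if Y has fewer shared exchanges than X and is weakly preferred by all
agents, rejection-proofness of X implies rejection-proofness of Y. -/
theorem rejection_proof_of_dominating [DecidableEq V]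
    (Vs : E → Finset V) (VA : P → Finset V) (w : P → E → ℝ)
    (X Y : Finset E) (hX : Feasible Vs X) (hY : Feasible Vs Y)
    (hshared : ∀ e ∈ Y, Shared Vs VA e → e ∈ X)
    (hval : ∀ i : P, agentVal w i X ≤ agentVal w i Y)
    (hrp : RejectionProof Vs VA w X) :
    RejectionProof Vs VA w Y :=
  rejection_proof_of_dominating_general Vs VA w X Y hshared hval hrp
end

section
/- The MaxInt mechanism is rejection-proof: any feasible solution X such that for each agent i, X ∩ E^i is a maximum agent-i-weight feasible solution among those using only internal exchanges of agent i (i.e., Σ_{e∈X∩E^i} w^i_e = β(V^i)), satisfies RKEP(X,i) ≤ w^i(X) for every agent i. -/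
open Finset
open scoped Classical

variable {V E P : Type*}

theorem Shared.not_internal {Vs : E → Finset V} {VA : P → Finset V} {e : E}
    (he : Shared Vs VA e) (i : P) : ¬ Internal Vs VA i e :=
  fun hi => he ⟨i, hi⟩

theorem sum_filter_not_internal_eq_sum_filter_shared {Vs : E → Finset V}
    {VA : P → Finset V} {w : P → E → ℝ}
    (hzero : ∀ (i j : P) (e : E), i ≠ j → Internal Vs VA j e → w i e = 0)
    (i : P) (Y : Finset E) :
    ∑ e ∈ Y.filter (fun e => ¬ Internal Vs VA i e), w i e =
      ∑ e ∈ Y.filter (fun e => Shared Vs VA e), w i e := by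
  symm
  apply Finset.sum_subset
  · exact Finset.monotone_filter_right _ fun e _ he => he.not_internal i
  · intro e he hnotShared
    simp only [Finset.mem_filter, not_and] at he hnotShared
    obtain ⟨j, hj⟩ := not_not.mp (hnotShared he.1)
    exact hzero i j e (fun hij => he.2 (hij ▸ hj)) hj

theorem maxint_rejection_proof_general [DecidableEq V]
    (Vs : E → Finset V) (VA : P → Finset V) (w : P → E → ℝ)
    (hw : ∀ i e, 0 ≤ w i e)
    (hzero : ∀ (i j : P) (e : E), i ≠ j → Internal Vs VA j e → w i e = 0)
    (X : Finset E)
    (hmax : ∀ i : P, ∀ Y : Finset E, Feasible Vs Y →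
      (∀ e ∈ Y, Internal Vs VA i e) →
      agentVal w i Y ≤ ∑ e ∈ X.filter (fun e => Internal Vs VA i e), w i e) :
    RejectionProof Vs VA w X := by
  rintro i Xi ⟨hfeas, -, hshared⟩
  set XInt := X.filter (fun e => Internal Vs VA i e)
  set XiInt := Xi.filter (fun e => Internal Vs VA i e)
  set XiSh := Xi.filter (fun e => Shared Vs VA e)
  have hXiInt : agentVal w i XiInt ≤ ∑ e ∈ XInt, w i e :=
    hmax i XiInt (hfeas.subset (Finset.filter_subset _ _)) fun e he => (Finset.mem_filter.mp he).2
  have hdisj : Disjoint XInt XiSh :=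
    Finset.disjoint_left.mpr fun e he he' =>
      (Finset.mem_filter.mp he').2.not_internal i (Finset.mem_filter.mp he).2
  have hsub : XInt ∪ XiSh ⊆ X :=
    Finset.union_subset (Finset.filter_subset _ _) fun e he =>
      hshared e (Finset.mem_filter.mp he).1 (Finset.mem_filter.mp he).2
  calc agentVal w i Xi
      = ∑ e ∈ XiInt, w i e + ∑ e ∈ Xi.filter (fun e => ¬ Internal Vs VA i e), w i e :=
        (Finset.sum_filter_add_sum_filter_not _ _ _).symm
    _ = ∑ e ∈ XiInt, w i e + ∑ e ∈ XiSh, w i e := by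
        rw [sum_filter_not_internal_eq_sum_filter_shared hzero]
    _ ≤ ∑ e ∈ XInt, w i e + ∑ e ∈ XiSh, w i e := add_le_add_left hXiInt _
    _ = ∑ e ∈ XInt ∪ XiSh, w i e := (Finset.sum_union hdisj).symm
    _ ≤ agentVal w i X := Finset.sum_le_sum_of_subset_of_nonneg hsub fun e _ _ => hw i e

/-- the MaxInt mechanism is rejection-proof. -/
theorem maxint_rejection_proof [DecidableEq V]
    (Vs : E → Finset V) (VA : P → Finset V) (w : P → E → ℝ)
    (hne : ∀ e, (Vs e).Nonempty)
    (hpart : ∀ i j : P, i ≠ j → Disjoint (VA i) (VA j))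
    (hw : ∀ i e, 0 ≤ w i e)
    (hzero : ∀ (i j : P) (e : E), i ≠ j → Internal Vs VA j e → w i e = 0)
    (X : Finset E) (hX : Feasible Vs X)
    (hmax : ∀ i : P, ∀ Y : Finset E, Feasible Vs Y →
      (∀ e ∈ Y, Internal Vs VA i e) →
      agentVal w i Y ≤ ∑ e ∈ X.filter (fun e => Internal Vs VA i e), w i e) :
    RejectionProof Vs VA w X :=
  maxint_rejection_proof_general Vs VA w hw hzero X hmax
end

section
/- In the kidney exchange game induced by a rejection-proof solution X, the strategy profile in which every agent accepts (X^i = { e ∈ X : V(e) ∩ V^i ≠ ∅ } for all i) is a pure Nash equilibrium: no agent can strictly increase its realized value by unilaterally deviating to another rejection strategy, given that all other agents accept. -/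
open Finset
open scoped Classical

variable {V E P : Type*}

theorem agentVal_le_of_ne_zero_mem (w : P → E → ℝ) (i : P) {Y Z : Finset E}
    (hYZ : ∀ e ∈ Y, w i e ≠ 0 → e ∈ Z) (hZ : ∀ e ∈ Z, 0 ≤ w i e) :
    agentVal w i Y ≤ agentVal w i Z :=
  calc ∑ e ∈ Y, w i e
      = ∑ e ∈ Y with e ∈ Z, w i e := (sum_filter_of_ne hYZ).symm
    _ ≤ ∑ e ∈ Z, w i e :=
      sum_le_sum_of_subset_of_nonneg (fun _ he => (mem_filter.1 he).2) fun e he _ => hZ e he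

theorem accept_profile_is_nash_general [DecidableEq V] [DecidableEq P]
    (Vs : E → Finset V) (VA : P → Finset V) (w : P → E → ℝ)
    (hw : ∀ i e, 0 ≤ w i e)
    (hzero : ∀ (i : P) (e : E), ¬ (Vs e ∩ VA i).Nonempty → w i e = 0)
    (X : Finset E)
    (hrp : RejectionProof Vs VA w X)
    (i : P) (Xi : Finset E) (hstrat : RejStrat Vs VA i X Xi)
    (X' : Finset E)
    (hX' : ∀ e : E, e ∈ X' ↔ ∀ j : P, (Vs e ∩ VA j).Nonempty →
        e ∈ (if j = i then Xi else X.filter (fun f => (Vs f ∩ VA j).Nonempty))) :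
    agentVal w i X' ≤ agentVal w i X := by
  have hdev : ∀ e ∈ X', w i e ≠ 0 → e ∈ Xi := fun e he hne => by
    have hmeets : (Vs e ∩ VA i).Nonempty := by_contra fun h => hne (hzero i e h)
    simpa using (hX' e).1 he i hmeets
  calc agentVal w i X' ≤ agentVal w i Xi :=
        agentVal_le_of_ne_zero_mem w i hdev fun e _ => hw i e
    _ ≤ agentVal w i X := hrp i Xi hstrat

/-- for a rejection-proof X, the all-accept profile is a pure Nash
equilibrium: any unilateral deviation of agent i yields payoff at most w^i(X). -/
theorem accept_profile_is_nash [DecidableEq V] [DecidableEq E] [DecidableEq P]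
    (Vs : E → Finset V) (VA : P → Finset V) (w : P → E → ℝ)
    (hw : ∀ i e, 0 ≤ w i e)
    (hzero : ∀ (i : P) (e : E), ¬ (Vs e ∩ VA i).Nonempty → w i e = 0)
    (X : Finset E) (hX : Feasible Vs X)
    (hrp : RejectionProof Vs VA w X)
    (i : P) (Xi : Finset E) (hstrat : RejStrat Vs VA i X Xi)
    (X' : Finset E)
    (hX' : ∀ e : E, e ∈ X' ↔ ∀ j : P, (Vs e ∩ VA j).Nonempty →
        e ∈ (if j = i then Xi else X.filter (fun f => (Vs f ∩ VA j).Nonempty))) :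
    agentVal w i X' ≤ agentVal w i X :=
  accept_profile_is_nash_general Vs VA w hw hzero X hrp i Xi hstrat X' hX'
end

section
/- Any feasible solution X satisfying the subset rejection constraints for all singleton-exchange-inducing subsets need not be rejection-proof: there exists an instance and a feasible solution X such that for every agent i and every U ⊆ V^i that is the vertex set of a single internal exchange, the constraint Σ_{e∈X: V(e)∩U≠∅} w^i_e ≥ β(U) holds, yet X is not rejection-proof. -/
open Finset
open scoped Classical

variable {V E P : Type*}

/-!
On the path `0 — 1 — 2 — 3` of three 2-cycles owned by a single agent, with unit weights, take
`X` to be the middle exchange `{1, 2}`. The vertex set of each exchange contains no other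
exchange, and it meets the middle one, so every singleton-exchange constraint reads `1 ≤ 1`.
The whole vertex set, however, carries the two outer exchanges, worth `2`.
-/

theorem Feasible.singleton (Vs : E → Finset V) (e : E) : Feasible Vs {e} := by
  intro a ha b hb hab
  rw [mem_singleton] at ha hb
  exact absurd (ha.trans hb.symm) hab

section

variable [DecidableEq V] {Vs : E → Finset V} {VA : P → Finset V} {w : P → E → ℝ}
  {X : Finset E} {i : P} {U : Finset V}

/-- Here β(U) = w^i(e₀): a feasible solution inside `U` is `∅` or `{e₀}`. -/
theorem subsetOK_of_unique_exchange_inside {e₀ x : E} (hw : ∀ e, 0 ≤ w i e)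
    (hU : ∀ e, Vs e ⊆ U → e = e₀) (hx : x ∈ X) (hxU : (Vs x ∩ U).Nonempty)
    (hle : w i e₀ ≤ w i x) : SubsetOK Vs VA w X i U := by
  intro Y _ hY
  have hY₀ : Y ⊆ {e₀} := fun e he => mem_singleton.2 (hU e (hY e he))
  calc agentVal w i Y ≤ agentVal w i {e₀} :=
        sum_le_sum_of_subset_of_nonneg hY₀ fun e _ _ => hw e
    _ = w i e₀ := sum_singleton _ _
    _ ≤ w i x := hle
    _ ≤ ∑ e ∈ X.filter (fun e => (Vs e ∩ U).Nonempty), w i e :=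
        single_le_sum (fun e _ => hw e) (mem_filter.2 ⟨hx, hxU⟩)

end

def pathExchanges : Fin 3 → Finset (Fin 4) := ![{0, 1}, {2, 3}, {1, 2}]

theorem pathExchanges_subset_iff {e e₀ : Fin 3} :
    pathExchanges e ⊆ pathExchanges e₀ ↔ e = e₀ := by
  fin_cases e <;> fin_cases e₀ <;> decide

theorem pathExchanges_middle_inter_nonempty (e : Fin 3) :
    (pathExchanges 2 ∩ pathExchanges e).Nonempty := by
  fin_cases e <;> decide

theorem feasible_pathExchanges_outer : Feasible pathExchanges {0, 1} := by
  unfold Feasible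
  decide

/-- subset rejection constraints restricted to vertex sets of single
internal exchanges are strictly weaker than full rejection-proofness. -/
theorem singleton_exchange_constraints_insufficient :
    ∃ (n m k : ℕ) (Vs : Fin m → Finset (Fin n)) (VA : Fin k → Finset (Fin n))
      (w : Fin k → Fin m → ℝ) (X : Finset (Fin m)),
      (∀ i e, 0 ≤ w i e) ∧
      Feasible Vs X ∧
      (∀ (i : Fin k) (e₀ : Fin m), Internal Vs VA i e₀ →
        SubsetOK Vs VA w X i (Vs e₀)) ∧
      ¬ (∀ i : Fin k, ∀ U ⊆ VA i, SubsetOK Vs VA w X i U) := by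
  refine ⟨4, 3, 1, pathExchanges, fun _ => univ, fun _ _ => 1, {2}, fun _ _ => zero_le_one,
    Feasible.singleton _ 2, fun _ e₀ _ => ?_, fun h => ?_⟩
  · exact subsetOK_of_unique_exchange_inside (fun _ => zero_le_one)
      (fun _ he => pathExchanges_subset_iff.1 he) (mem_singleton_self 2)
      (pathExchanges_middle_inter_nonempty e₀) le_rfl
  · have outer_le_middle := h 0 univ (subset_univ _) {0, 1} feasible_pathExchanges_outer
      fun _ _ => subset_univ _
    have middle_nonempty : (pathExchanges 2).Nonempty := by decide
    norm_num [agentVal, filter_singleton, middle_nonempty] at outer_le_middle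
end
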